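/- Let p ≥ 5 and let V be a 2-dimensional 𝔽_p-vector space with a group action of G = GL₂(𝔽_p) (via the identity map). If the image of a representation ρ̄: G → GL₂(𝔽_p) contains a nontrivial element of order p (i.e., a nontrivial unipotent element) and ρ̄ is irreducible with det ρ̄ surjective onto 𝔽_p^×, then the image of ρ̄ contains SL₂(𝔽_p) and hence equals GL₂(𝔽_p). -/

import Mathlib

/-!
Let `u = ρ g` have order `p`. In characteristic `p`, `(u - 1)^p = u^p - 1 = 0`, so `u - 1` is a
nonzero nilpotent `2 × 2` matrix and `(u - 1)^2 = 0`: `u` is a transvection fixing a line `L`.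
Irreducibility provides `h` in the image with `h L ≠ L`, and `h u h⁻¹` is a transvection fixing
`h L`. In a basis adapted to `L` and `h L` these two elements become `[1, c; 0, 1]` and
`[1, 0; d, 1]` with `c, d ≠ 0`. Since `𝔽_p` is additively generated by any nonzero element,
their powers give all upper and lower unipotent matrices, and these generate `SL₂`.
Surjectivity of the determinant then gives all of `GL₂`.
-/

open Matrix Matrix.GeneralLinearGroup

theorem Matrix.pow_card_eq_zero_of_isNilpotent {R n : Type*} [CommRing R] [IsDomain R]
    [Fintype n] [DecidableEq n] {M : Matrix n n R} (hM : IsNilpotent M) :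
    M ^ Fintype.card n = 0 := by
  have hchar := (isNilpotent_charpoly_sub_pow_of_isNilpotent hM).eq_zero
  rw [sub_eq_zero] at hchar
  simpa [hchar] using aeval_self_charpoly M

theorem Matrix.mul_transpose_of_eq {R n : Type*} [CommRing R] [Fintype n] (A B : Matrix n n R)
    (f : n → n → R) (h : ∀ j, A *ᵥ f j = ∑ i, B i j • f i) :
    A * (of f)ᵀ = (of f)ᵀ * B := by
  ext i j
  have hj := congrFun (h j) i
  simp only [mulVec, dotProduct, Finset.sum_apply, Pi.smul_apply, smul_eq_mul] at hj
  simp only [mul_apply, transpose_apply, of_apply, hj]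
  exact Finset.sum_congr rfl fun _ _ ↦ mul_comm _ _

theorem AddChar.map_mem_of_ne_zero {p : ℕ} [Fact p.Prime] {G : Type*} [Group G]
    (ψ : AddChar (ZMod p) G) {S : Subgroup G} {c : ZMod p} (hc : c ≠ 0) (hψc : ψ c ∈ S)
    (t : ZMod p) : ψ t ∈ S := by
  have ht : t = (t / c).val • c := by
    rw [nsmul_eq_mul, ZMod.natCast_zmod_val, div_mul_cancel₀ _ hc]
  rw [ht, AddChar.map_nsmul_eq_pow]
  exact pow_mem hψc _

namespace Matrix.GeneralLinearGroup

section Field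

variable {K n : Type*} [Field K] [Fintype n] [DecidableEq n]

theorem sub_one_pow_card_eq_zero (p : ℕ) [Fact p.Prime] [CharP K p] [Nonempty n] {u : GL n K}
    (hu : u ^ p = 1) : ((u : Matrix n n K) - 1) ^ Fintype.card n = 0 := by
  refine pow_card_eq_zero_of_isNilpotent ⟨p, ?_⟩
  rw [sub_pow_char_of_commute p (Commute.one_right _), ← Units.val_pow_eq_pow_val, hu,
    Units.val_one, one_pow, sub_self]

theorem exists_mulVec_eq_self_of_pow_eq_one (p : ℕ) [Fact p.Prime] [CharP K p] [Nonempty n]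
    {u : GL n K} (hu : u ^ p = 1) : ∃ f ≠ 0, (u : Matrix n n K) *ᵥ f = f := by
  have hdet : ((u : Matrix n n K) - 1).det = 0 := by
    rw [← pow_eq_zero_iff (Fintype.card_ne_zero (α := n)), ← det_pow,
      sub_one_pow_card_eq_zero p hu, det_zero]
  obtain ⟨f, hf, hf1⟩ := exists_mulVec_eq_zero_iff.mpr hdet
  exact ⟨f, hf, by rwa [sub_mulVec, one_mulVec, sub_eq_zero] at hf1⟩

theorem eq_top_of_det_eq_one_mem {H : Subgroup (GL n K)}
    (hSL : ∀ A : GL n K, (A : Matrix n n K).det = 1 → A ∈ H)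
    (hdet : ∀ x : K, x ≠ 0 → ∃ B ∈ H, (B : Matrix n n K).det = x) : H = ⊤ := by
  refine (Subgroup.eq_top_iff' H).mpr fun A ↦ ?_
  obtain ⟨B, hB, hBA⟩ := hdet _ A.det_ne_zero
  have hAB : A * B⁻¹ ∈ H := hSL _ <| by
    rw [Units.val_mul, det_mul, ← hBA, ← det_mul, ← Units.val_mul, mul_inv_cancel,
      Units.val_one, det_one]
  simpa using mul_mem hAB hB

end Field

@[simps apply]
def lowerLeftHom {R : Type*} [Ring R] : AddChar R (GL (Fin 2) R) where
  toFun x := ⟨!![1, 0; x, 1], !![1, 0; -x, 1], by simp [one_fin_two], by simp [one_fin_two]⟩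
  map_zero_eq_one' := by simp [Units.ext_iff, one_fin_two]
  map_add_eq_mul' a b := by simp [Units.ext_iff, add_comm]

end Matrix.GeneralLinearGroup

section TwoByTwo

variable {K : Type*} [Field K]

theorem exists_linearIndependent_pair_mulVec {ι : Type*} {M : ι → Matrix (Fin 2) (Fin 2) K}
    (hirr : ∀ W : Submodule K (Fin 2 → K), (∀ i, ∀ v ∈ W, M i *ᵥ v ∈ W) → W = ⊥ ∨ W = ⊤)
    {f : Fin 2 → K} (hf : f ≠ 0) : ∃ i, LinearIndependent K ![f, M i *ᵥ f] := by
  simp only [LinearIndependent.pair_iff' hf]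
  by_contra! h
  have hstable : ∀ i, ∀ v ∈ K ∙ f, M i *ᵥ v ∈ K ∙ f := by
    intro i v hv
    obtain ⟨a, rfl⟩ := Submodule.mem_span_singleton.mp hv
    obtain ⟨b, hb⟩ := h i
    rw [mulVec_smul, ← hb]
    exact Submodule.smul_mem _ a (Submodule.smul_mem _ b (Submodule.mem_span_singleton_self f))
  rcases hirr _ hstable with hbot | htop
  · exact hf (Submodule.span_singleton_eq_bot.mp hbot)
  · have hrank := finrank_span_singleton (K := K) hf
    rw [htop, finrank_top, Module.finrank_fin_fun] at hrank
    omega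

theorem Matrix.ker_toLin'_eq_span_singleton {N : Matrix (Fin 2) (Fin 2) K} (hN : N ≠ 0)
    {f : Fin 2 → K} (hf : f ≠ 0) (hNf : N *ᵥ f = 0) : LinearMap.ker (toLin' N) = K ∙ f := by
  refine (Submodule.eq_of_le_of_finrank_le ?_ ?_).symm
  · simpa [Submodule.span_singleton_le_iff_mem] using hNf
  · have hker : LinearMap.ker (toLin' N) ≠ ⊤ := by
      rwa [Ne, LinearMap.ker_eq_top, map_eq_zero_iff _ toLin'.injective]
    have hrank := Submodule.finrank_lt hker
    rw [Module.finrank_fin_fun] at hrank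
    rw [finrank_span_singleton hf]
    omega

theorem Matrix.exists_mulVec_eq_add_smul {u : Matrix (Fin 2) (Fin 2) K} (hu : u ≠ 1)
    (hu2 : (u - 1) ^ 2 = 0) {f : Fin 2 → K} (hf : f ≠ 0) (huf : u *ᵥ f = f) {x : Fin 2 → K}
    (hx : x ∉ K ∙ f) : ∃ c ≠ (0 : K), u *ᵥ x = x + c • f := by
  have hker := ker_toLin'_eq_span_singleton (sub_ne_zero.mpr hu) hf
    (by rw [sub_mulVec, huf, one_mulVec, sub_self])
  have hNx : (u - 1) *ᵥ x ∈ K ∙ f := by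
    rw [← hker, LinearMap.mem_ker, toLin'_apply, mulVec_mulVec, ← sq, hu2, zero_mulVec]
  obtain ⟨c, hc⟩ := Submodule.mem_span_singleton.mp hNx
  refine ⟨c, ?_, ?_⟩
  · rintro rfl
    rw [zero_smul, eq_comm] at hc
    exact hx (hker ▸ hc)
  · rw [hc, sub_mulVec, one_mulVec]
    abel

namespace Matrix.GeneralLinearGroup

theorem eq_upperRight_mul_lowerLeft_mul_upperRight {A : GL (Fin 2) K}
    (hA : (A : Matrix (Fin 2) (Fin 2) K).det = 1) (hc : A 1 0 ≠ 0) :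
    A = upperRightHom ((A 0 0 - 1) / A 1 0) * lowerLeftHom (A 1 0) *
      upperRightHom ((A 1 1 - 1) / A 1 0) := by
  rw [det_fin_two] at hA
  ext i j
  simp only [Units.val_mul, upperRightHom_apply, lowerLeftHom_apply, mul_fin_two]
  fin_cases i <;> fin_cases j <;>
    simp only [Fin.zero_eta, Fin.mk_one, of_apply, cons_val', cons_val_zero, cons_val_one,
      cons_val_fin_one] <;>
    field_simp <;> first | ring1 | linear_combination -hA

theorem mem_of_det_eq_one {S : Subgroup (GL (Fin 2) K)}
    (hU : ∀ t, upperRightHom t ∈ S) (hL : ∀ t, lowerLeftHom t ∈ S) {A : GL (Fin 2) K}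
    (hA : (A : Matrix (Fin 2) (Fin 2) K).det = 1) : A ∈ S := by
  have key : ∀ B : GL (Fin 2) K, (B : Matrix (Fin 2) (Fin 2) K).det = 1 → B 1 0 ≠ 0 → B ∈ S :=
    fun B hB hc ↦ eq_upperRight_mul_lowerLeft_mul_upperRight hB hc ▸
      mul_mem (mul_mem (hU _) (hL _)) (hU _)
  by_cases hc : A 1 0 = 0
  · have ha : A 0 0 ≠ 0 := fun ha ↦ by simp [det_fin_two, ha, hc] at hA
    have hLA : lowerLeftHom 1 * A ∈ S :=
      key _ (by rw [Units.val_mul, det_mul, hA]; simp [det_fin_two])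
        (by simpa [mul_apply, Fin.sum_univ_two, hc] using ha)
    have hA' := mul_mem (hL (-1)) hLA
    rwa [← mul_assoc, ← AddChar.map_add_eq_mul, neg_add_cancel, AddChar.map_zero_eq_one,
      one_mul] at hA'
  · exact key A hA hc

theorem exists_conj_eq_upperRight_and_lowerLeft {u v : GL (Fin 2) K}
    (hu : u ≠ 1) (hv : v ≠ 1) (hu2 : ((u : Matrix (Fin 2) (Fin 2) K) - 1) ^ 2 = 0)
    (hv2 : ((v : Matrix (Fin 2) (Fin 2) K) - 1) ^ 2 = 0) {f₁ f₂ : Fin 2 → K}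
    (hf : LinearIndependent K ![f₁, f₂]) (hf₁ : u *ᵥ f₁ = f₁) (hf₂ : v *ᵥ f₂ = f₂) :
    ∃ Q : GL (Fin 2) K, ∃ c ≠ (0 : K), ∃ d ≠ (0 : K),
      Q * upperRightHom c * Q⁻¹ = u ∧ Q * lowerLeftHom d * Q⁻¹ = v := by
  have hf₁0 : f₁ ≠ 0 := hf.ne_zero 0
  have hf₂0 : f₂ ≠ 0 := hf.ne_zero 1
  have hf₂₁ : f₂ ∉ K ∙ f₁ := fun h ↦ by
    obtain ⟨a, ha⟩ := Submodule.mem_span_singleton.mp h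
    exact (LinearIndependent.pair_iff' hf₁0).mp hf a ha
  have hf₁₂ : f₁ ∉ K ∙ f₂ := fun h ↦ by
    obtain ⟨a, ha⟩ := Submodule.mem_span_singleton.mp h
    exact (LinearIndependent.pair_iff' hf₂0).mp (LinearIndependent.pair_symm_iff.mp hf) a ha
  obtain ⟨c, hc, huf₂⟩ := exists_mulVec_eq_add_smul (by simpa using hu) hu2 hf₁0 hf₁ hf₂₁
  obtain ⟨d, hd, hvf₁⟩ := exists_mulVec_eq_add_smul (by simpa using hv) hv2 hf₂0 hf₂ hf₁₂
  have hQ : IsUnit (of ![f₁, f₂])ᵀ := linearIndependent_cols_iff_isUnit.mp hf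
  refine ⟨hQ.unit, c, hc, d, hd, ?_, ?_⟩
  all_goals
    rw [mul_inv_eq_iff_eq_mul, Units.ext_iff, Units.val_mul, Units.val_mul, IsUnit.unit_spec]
    refine (mul_transpose_of_eq _ _ _ ?_).symm
    simp only [Fin.forall_fin_two, Fin.sum_univ_two, upperRightHom_apply, lowerLeftHom_apply,
      cons_val_zero, cons_val_one, of_apply, cons_val', empty_val', cons_val_fin_one]
    simp [hf₁, hf₂, huf₂, hvf₁, add_comm]

end Matrix.GeneralLinearGroup

end TwoByTwo

theorem Matrix.GeneralLinearGroup.mem_of_conj_upperRight_mem_of_conj_lowerLeft_mem {p : ℕ}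
    [Fact p.Prime] {H : Subgroup (GL (Fin 2) (ZMod p))} {Q : GL (Fin 2) (ZMod p)}
    {c d : ZMod p} (hc : c ≠ 0) (hd : d ≠ 0) (hQc : Q * upperRightHom c * Q⁻¹ ∈ H)
    (hQd : Q * lowerLeftHom d * Q⁻¹ ∈ H) {A : GL (Fin 2) (ZMod p)}
    (hA : (A : Matrix (Fin 2) (Fin 2) (ZMod p)).det = 1) : A ∈ H := by
  set S := H.comap (MulAut.conj Q).toMonoidHom
  have hU : ∀ t, upperRightHom t ∈ S := upperRightHom.map_mem_of_ne_zero hc hQc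
  have hL : ∀ t, lowerLeftHom t ∈ S := lowerLeftHom.map_mem_of_ne_zero hd hQd
  have hQA := mem_of_det_eq_one hU hL (A := Q⁻¹ * A * Q) <| by
    rw [Units.val_mul, Units.val_mul, det_units_conj', hA]
  simpa [S, mul_assoc] using hQA

theorem stmt_6_general (p : ℕ) [Fact p.Prime]
    (G : Type*) [Group G] (ρ : G →* GL (Fin 2) (ZMod p))
    (hunip : ∃ g : G, ρ g ≠ 1 ∧ orderOf (ρ g) = p)
    (hirr : ∀ W : Submodule (ZMod p) (Fin 2 → ZMod p),
      (∀ (g : G), ∀ v ∈ W, Matrix.mulVec ((ρ g : Matrix (Fin 2) (Fin 2) (ZMod p))) v ∈ W) →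
      W = ⊥ ∨ W = ⊤)
    (hdet : ∀ x : ZMod p, x ≠ 0 →
      ∃ g : G, Matrix.det ((ρ g : Matrix (Fin 2) (Fin 2) (ZMod p))) = x) :
    (∀ A : GL (Fin 2) (ZMod p),
        Matrix.det ((A : Matrix (Fin 2) (Fin 2) (ZMod p))) = 1 → A ∈ ρ.range) ∧
      ρ.range = ⊤ := by
  obtain ⟨g, hu1, hord⟩ := hunip
  set u := ρ g
  have hup : u ^ p = 1 := orderOf_dvd_iff_pow_eq_one.mp hord.dvd
  obtain ⟨f, hf, huf⟩ := exists_mulVec_eq_self_of_pow_eq_one p hup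
  obtain ⟨g₀, hli⟩ := exists_linearIndependent_pair_mulVec hirr hf
  set h := ρ g₀
  have hvp : (h * u * h⁻¹) ^ p = 1 := by rw [conj_pow, hup, mul_one, mul_inv_cancel]
  have hvf : (h * u * h⁻¹ : GL (Fin 2) (ZMod p)) *ᵥ ((h : Matrix (Fin 2) (Fin 2) (ZMod p)) *ᵥ f) =
      (h : Matrix (Fin 2) (Fin 2) (ZMod p)) *ᵥ f := by
    rw [Units.val_mul, Units.val_mul, mulVec_mulVec, mul_assoc, Units.inv_mul, mul_one,
      ← mulVec_mulVec, huf]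
  obtain ⟨Q, c, hc, d, hd, hQu, hQv⟩ := exists_conj_eq_upperRight_and_lowerLeft hu1
    (conj_eq_one_iff.not.mpr hu1) (sub_one_pow_card_eq_zero p hup)
    (sub_one_pow_card_eq_zero p hvp) hli huf hvf
  have hρ : ∀ x, ρ x ∈ ρ.range := fun x ↦ ⟨x, rfl⟩
  have hSL : ∀ A : GL (Fin 2) (ZMod p), (A : Matrix (Fin 2) (Fin 2) (ZMod p)).det = 1 →
      A ∈ ρ.range := fun A ↦ mem_of_conj_upperRight_mem_of_conj_lowerLeft_mem hc hd
    (hQu ▸ hρ g) (hQv ▸ mul_mem (mul_mem (hρ g₀) (hρ g)) (inv_mem (hρ g₀)))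
  exact ⟨hSL, eq_top_of_det_eq_one_mem hSL fun x hx ↦
    let ⟨g, hg⟩ := hdet x hx; ⟨ρ g, hρ g, hg⟩⟩

/-- Let `p ≥ 5` be a prime.  If the image of a representation
`ρ̄ : G → GL₂(𝔽_p)` contains a nontrivial element of order `p` (a nontrivial
unipotent element), `ρ̄` is irreducible (no stable line, stated as: the only
stable submodules of `𝔽_p²` are `⊥` and `⊤`), and `det ρ̄` surjects onto
`𝔽_p^×`, then the image of `ρ̄` contains `SL₂(𝔽_p)` and hence equals
`GL₂(𝔽_p)`. -/
theorem stmt_6 (p : ℕ) [Fact p.Prime] (hp : 5 ≤ p)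
    (G : Type*) [Group G] (ρ : G →* GL (Fin 2) (ZMod p))
    (hunip : ∃ g : G, ρ g ≠ 1 ∧ orderOf (ρ g) = p)
    (hirr : ∀ W : Submodule (ZMod p) (Fin 2 → ZMod p),
      (∀ (g : G), ∀ v ∈ W, Matrix.mulVec ((ρ g : Matrix (Fin 2) (Fin 2) (ZMod p))) v ∈ W) →
      W = ⊥ ∨ W = ⊤)
    (hdet : ∀ x : ZMod p, x ≠ 0 →
      ∃ g : G, Matrix.det ((ρ g : Matrix (Fin 2) (Fin 2) (ZMod p))) = x) :
    (∀ A : GL (Fin 2) (ZMod p),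
        Matrix.det ((A : Matrix (Fin 2) (Fin 2) (ZMod p))) = 1 → A ∈ ρ.range) ∧
      ρ.range = ⊤ :=
  stmt_6_general p G ρ hunip hirr hdet
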